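/- arXiv:1702.07265 — 2 statements merged into one kernel-verified Lean document; each statement's English description precedes it below -/
import Mathlib

section
/- Redundancy of non-leader packets in the cMAN delivery: let K ≥ 1, N ≥ 1 and t be naturals with t+1 ≤ K, let d : Fin K → Fin N be a demand, and let L ⊆ Fin K be a leader set such that d restricted to L is injective and d(L) = d(Fin K) (every demanded file is demanded by exactly one leader). For subfile assignments F : Fin N → {W : Finset (Fin K) // W.card = t} → 𝔽₂, define the 𝔽₂-linear functionals X_S(F) = ∑_{s∈S} F(d s)(S∖{s}) for each (t+1)-subset S of Fin K. Then for every (t+1)-subset S with S ∩ L = ∅ there exist coefficients c_{S'} ∈ 𝔽₂, indexed by the (t+1)-subsets S' with S' ∩ L ≠ ∅, such that X_S(F) = ∑_{S' : S'∩L ≠ ∅} c_{S'} · X_{S'}(F) for all F. In particular, the C(K−|L|, t+1) packets X_S with S ∩ L = ∅ are 𝔽₂-linear combinations of the remaining packets and need not be transmitted. -/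
/-- The cMAN delivery packet `X_S(F) = ∑_{s ∈ S} F_{d_s, S∖{s}}` over `𝔽₂`. -/
noncomputable def cmanPacket {K N t : ℕ}
    (d : Fin K → Fin N) (F : Fin N → {W : Finset (Fin K) // W.card = t} → ZMod 2)
    (S : {S : Finset (Fin K) // S.card = t + 1}) : ZMod 2 :=
  ∑ s ∈ S.1.attach,
    F (d s.1) ⟨S.1.erase s.1, by simp [Finset.card_erase_of_mem s.2, S.2]⟩

open scoped Classical

/-- `X_B` as a total function of the finset `B`. -/
noncomputable def cmanXf {K N t : ℕ} (d : Fin K → Fin N)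
    (F : Fin N → {W : Finset (Fin K) // W.card = t} → ZMod 2)
    (B : Finset (Fin K)) : ZMod 2 :=
  if h : B.card = t + 1 then cmanPacket d F ⟨B, h⟩ else 0

/-- Core counting lemma: for fixed `M` and target demand set `D`, the set of users `s ∈ M`
such that `M.erase s` is a transversal of `D` is either empty or a pair with equal demands,
so the corresponding `𝔽₂`-sum vanishes. -/
lemma cman_core {K N : ℕ} (d : Fin K → Fin N) (M : Finset (Fin K)) (D : Finset (Fin N))
    (hD : ∀ s ∈ M, d s ∈ D) (g : Fin N → ZMod 2) :
    ∑ s ∈ M.filter (fun s => Set.InjOn d ↑(M.erase s) ∧ Finset.image d (M.erase s) = D),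
      g (d s) = 0 := by
  classical
  set Z := M.filter (fun s => Set.InjOn d ↑(M.erase s) ∧ Finset.image d (M.erase s) = D)
    with hZdef
  rcases Z.eq_empty_or_nonempty with h | ⟨s, hsZ⟩
  · rw [h]; simp
  · have hs := hsZ
    rw [hZdef, Finset.mem_filter] at hs
    obtain ⟨hsM, hinj, himg⟩ := hs
    have hds : d s ∈ (M.erase s).image d := by rw [himg]; exact hD s hsM
    obtain ⟨u, huE, hdu⟩ := Finset.mem_image.mp hds
    have hus : u ≠ s := Finset.ne_of_mem_erase huE
    have huM : u ∈ M := Finset.mem_of_mem_erase huE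
    have huZ : u ∈ Z := by
      rw [hZdef, Finset.mem_filter]
      refine ⟨huM, ?_, ?_⟩
      · intro x hx y hy hxy
        have hx' : x ∈ M.erase u := hx
        have hy' : y ∈ M.erase u := hy
        have hxM : x ∈ M := Finset.mem_of_mem_erase hx'
        have hyM : y ∈ M := Finset.mem_of_mem_erase hy'
        by_cases hxs : x = s
        · by_cases hys : y = s
          · rw [hxs, hys]
          · exfalso
            have hyE : y ∈ M.erase s := Finset.mem_erase.mpr ⟨hys, hyM⟩
            have huE' : u ∈ M.erase s := Finset.mem_erase.mpr ⟨hus, huM⟩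
            have : y = u := hinj hyE huE' (by rw [hdu, ← hxs, ← hxy])
            exact (Finset.ne_of_mem_erase hy') this
        · by_cases hys : y = s
          · exfalso
            have hxE : x ∈ M.erase s := Finset.mem_erase.mpr ⟨hxs, hxM⟩
            have huE' : u ∈ M.erase s := Finset.mem_erase.mpr ⟨hus, huM⟩
            have : x = u := hinj hxE huE' (by rw [hdu, ← hys, hxy])
            exact (Finset.ne_of_mem_erase hx') this
          · exact hinj (Finset.mem_erase.mpr ⟨hxs, hxM⟩) (Finset.mem_erase.mpr ⟨hys, hyM⟩) hxy
      · apply Finset.Subset.antisymm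
        · intro v hv
          obtain ⟨x, hx, rfl⟩ := Finset.mem_image.mp hv
          exact hD x (Finset.mem_of_mem_erase hx)
        · intro v hv
          rw [← himg] at hv
          obtain ⟨x, hx, rfl⟩ := Finset.mem_image.mp hv
          by_cases hxu : x = u
          · refine Finset.mem_image.mpr ⟨s, Finset.mem_erase.mpr ⟨Ne.symm hus, hsM⟩, ?_⟩
            rw [← hdu, hxu]
          · exact Finset.mem_image.mpr
              ⟨x, Finset.mem_erase.mpr ⟨hxu, Finset.mem_of_mem_erase hx⟩, rfl⟩
    have hZeq : Z = {s, u} := by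
      apply Finset.Subset.antisymm
      · intro w hw
        rw [hZdef, Finset.mem_filter] at hw
        obtain ⟨hwM, hwinj, hwimg⟩ := hw
        by_cases hws : w = s
        · simp [hws]
        · by_cases hwu : w = u
          · simp [hwu]
          · exfalso
            have hsE : s ∈ M.erase w := Finset.mem_erase.mpr ⟨fun h => hws h.symm, hsM⟩
            have huE' : u ∈ M.erase w := Finset.mem_erase.mpr ⟨fun h => hwu h.symm, huM⟩
            exact hus (hwinj huE' hsE hdu)
      · intro w hw
        rcases Finset.mem_insert.mp hw with h | h
        · rwa [h]
        · rw [Finset.mem_singleton.mp h]; exact huZ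
    rw [hZeq, Finset.sum_pair (fun h => hus h.symm), hdu, CharTwo.add_self_eq_zero]

/-- Key identity: the sum over all `(t+1)`-subsets `S''` of `A` whose complement in `A` is a
transversal of the demands of `A` of the packets `X_{S''}` vanishes over `𝔽₂`. -/
lemma cman_key {K N t : ℕ} (d : Fin K → Fin N) (A : Finset (Fin K))
    (F : Fin N → {W : Finset (Fin K) // W.card = t} → ZMod 2) :
    ∑ S'' ∈ (A.powersetCard (t + 1)).filter
        (fun S'' => Set.InjOn d ↑(A \ S'') ∧ Finset.image d (A \ S'') = Finset.image d A),
      cmanXf d F S'' = 0 := by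
  classical
  set 𝒞 := (A.powersetCard (t + 1)).filter
      (fun S'' => Set.InjOn d ↑(A \ S'') ∧ Finset.image d (A \ S'') = Finset.image d A)
    with h𝒞
  set f : Fin K → Finset (Fin K) → ZMod 2 :=
    fun s W => if h : W.card = t then F (d s) ⟨W, h⟩ else 0 with hf
  have hE : ∀ (W : Finset (Fin K)) (s : Fin K), (A \ W).erase s = A \ insert s W :=
    fun W s => (Finset.sdiff_insert A W s).symm
  have step1 : ∀ S'' ∈ 𝒞, cmanXf d F S'' = ∑ s ∈ S'', f s (S''.erase s) := by
    intro S'' hS''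
    have hcard : S''.card = t + 1 :=
      (Finset.mem_powersetCard.mp (Finset.mem_filter.mp hS'').1).2
    rw [cmanXf, dif_pos hcard, cmanPacket,
      ← Finset.sum_attach S'' (fun s => f s (S''.erase s))]
    apply Finset.sum_congr rfl
    intro x _
    have hx : (S''.erase x.1).card = t := by
      rw [Finset.card_erase_of_mem x.2, hcard]; omega
    simp only [hf]
    rw [dif_pos hx]
  rw [Finset.sum_congr rfl step1, Finset.sum_sigma' 𝒞 (fun S'' => S'')
    (fun S'' s => f s (S''.erase s))]
  have step2 : ∑ p ∈ 𝒞.sigma (fun S'' => S''), f p.2 (p.1.erase p.2)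
      = ∑ q ∈ (A.powersetCard t).sigma (fun W => (A \ W).filter
          (fun s => Set.InjOn d ↑((A \ W).erase s) ∧
            Finset.image d ((A \ W).erase s) = Finset.image d A)),
        f q.2 q.1 := by
    apply Finset.sum_nbij' (fun p => ⟨p.1.erase p.2, p.2⟩) (fun q => ⟨insert q.2 q.1, q.2⟩)
    · rintro ⟨S'', s⟩ hp
      rw [Finset.mem_sigma] at hp
      obtain ⟨h1, h2⟩ := hp
      rw [h𝒞, Finset.mem_filter, Finset.mem_powersetCard] at h1
      obtain ⟨⟨hsub, hcard⟩, hcond⟩ := h1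
      rw [Finset.mem_sigma]
      constructor
      · rw [Finset.mem_powersetCard]
        exact ⟨(Finset.erase_subset _ _).trans hsub,
          by rw [Finset.card_erase_of_mem h2, hcard]; omega⟩
      · rw [Finset.mem_filter]
        refine ⟨Finset.mem_sdiff.mpr ⟨hsub h2, Finset.notMem_erase _ _⟩, ?_⟩
        rw [hE, Finset.insert_erase h2]
        exact hcond
    · rintro ⟨W, s⟩ hq
      rw [Finset.mem_sigma] at hq
      obtain ⟨h1, h2⟩ := hq
      rw [Finset.mem_powersetCard] at h1
      rw [Finset.mem_filter] at h2
      obtain ⟨hsAW, hcond⟩ := h2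
      rw [hE] at hcond
      obtain ⟨hsA, hsW⟩ := Finset.mem_sdiff.mp hsAW
      rw [Finset.mem_sigma]
      constructor
      · rw [h𝒞, Finset.mem_filter, Finset.mem_powersetCard]
        exact ⟨⟨Finset.insert_subset hsA h1.1,
          by rw [Finset.card_insert_of_notMem hsW, h1.2]⟩, hcond⟩
      · exact Finset.mem_insert_self _ _
    · rintro ⟨S'', s⟩ hp
      rw [Finset.mem_sigma] at hp
      simp [Finset.insert_erase hp.2]
    · rintro ⟨W, s⟩ hq
      rw [Finset.mem_sigma, Finset.mem_filter, Finset.mem_sdiff] at hq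
      simp [Finset.erase_insert hq.2.1.2]
    · intro p _
      rfl
  rw [step2, Finset.sum_sigma]
  apply Finset.sum_eq_zero
  intro W hW
  rw [Finset.mem_powersetCard] at hW
  have := cman_core d (A \ W) (Finset.image d A)
    (fun s hs => Finset.mem_image_of_mem d (Finset.mem_sdiff.mp hs).1)
    (fun i => if h : W.card = t then F i ⟨W, h⟩ else 0)
  simpa only [hf] using this

/-- Redundancy of non-leader packets: if `L` is a leader set (i.e. `d` is injective
on `L` and `d(L) = d(Fin K)`), then every packet `X_S` with `S ∩ L = ∅` is an
`𝔽₂`-linear combination of the packets `X_{S'}` with `S' ∩ L ≠ ∅`, uniformly in the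
subfile assignment `F`. -/
theorem cMAN_nonleader_packets_redundant (K N t : ℕ) (hK : 1 ≤ K) (hN : 1 ≤ N)
    (ht : t + 1 ≤ K) (d : Fin K → Fin N) (L : Finset (Fin K))
    (hInj : Set.InjOn d (L : Set (Fin K)))
    (hCover : L.image d = (Finset.univ : Finset (Fin K)).image d) :
    ∀ S : Finset (Fin K), ∀ hS : S.card = t + 1, S ∩ L = ∅ →
      ∃ c : {S' : Finset (Fin K) // S'.card = t + 1 ∧ (S' ∩ L).Nonempty} → ZMod 2,
        ∀ F : Fin N → {W : Finset (Fin K) // W.card = t} → ZMod 2,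
          cmanPacket d F ⟨S, hS⟩
            = ∑ S' : {S' : Finset (Fin K) // S'.card = t + 1 ∧ (S' ∩ L).Nonempty},
                c S' * cmanPacket d F ⟨S'.1, S'.2.1⟩ := by
  classical
  intro S hS hSL
  set L' := L.filter (fun ℓ => d ℓ ∈ S.image d) with hL'
  set A := S ∪ L' with hA
  set 𝒞 := (A.powersetCard (t + 1)).filter
      (fun S'' => Set.InjOn d ↑(A \ S'') ∧ Finset.image d (A \ S'') = Finset.image d A)
    with h𝒞
  have hdisjSL : Disjoint S L := Finset.disjoint_iff_inter_eq_empty.mpr hSL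
  have hdisjSL' : Disjoint S L' := hdisjSL.mono_right (Finset.filter_subset _ _)
  have hAS : A \ S = L' := by rw [hA, Finset.union_sdiff_cancel_left hdisjSL']
  have hSA : S ⊆ A := Finset.subset_union_left
  have hL'img : Finset.image d L' = Finset.image d S := by
    apply Finset.Subset.antisymm
    · intro v hv
      obtain ⟨ℓ, hℓ, rfl⟩ := Finset.mem_image.mp hv
      exact (Finset.mem_filter.mp hℓ).2
    · intro v hv
      obtain ⟨s, hsS, rfl⟩ := Finset.mem_image.mp hv
      have : d s ∈ L.image d := by
        rw [hCover]; exact Finset.mem_image_of_mem d (Finset.mem_univ s)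
      obtain ⟨ℓ, hℓL, hdℓ⟩ := Finset.mem_image.mp this
      refine Finset.mem_image.mpr ⟨ℓ, ?_, hdℓ⟩
      rw [hL', Finset.mem_filter]
      exact ⟨hℓL, by rw [hdℓ]; exact Finset.mem_image_of_mem d hsS⟩
  have hAimg : Finset.image d A = Finset.image d L' := by
    rw [hA, Finset.image_union, hL'img, Finset.union_self]
  have hS𝒞 : S ∈ 𝒞 := by
    rw [h𝒞, Finset.mem_filter, Finset.mem_powersetCard]
    refine ⟨⟨hSA, hS⟩, ?_, ?_⟩
    · rw [hAS]
      exact hInj.mono (Finset.coe_subset.mpr (Finset.filter_subset _ _))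
    · rw [hAS, hAimg]
  have hne : ∀ S'' ∈ 𝒞, S'' ≠ S → (S'' ∩ L).Nonempty := by
    intro S'' h𝒞'' hneq
    by_contra hemp
    rw [Finset.not_nonempty_iff_eq_empty] at hemp
    have hdisj : Disjoint S'' L := Finset.disjoint_iff_inter_eq_empty.mpr hemp
    have hsubA : S'' ⊆ A :=
      (Finset.mem_powersetCard.mp (Finset.mem_filter.mp h𝒞'').1).1
    have hcard'' : S''.card = t + 1 :=
      (Finset.mem_powersetCard.mp (Finset.mem_filter.mp h𝒞'').1).2
    have hsub : S'' ⊆ S := by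
      intro x hx
      rcases Finset.mem_union.mp (hsubA hx) with h | h
      · exact h
      · exact (Finset.disjoint_left.mp hdisj hx (Finset.filter_subset _ _ h)).elim
    exact hneq (Finset.eq_of_subset_of_card_le hsub (by rw [hS, hcard'']))
  refine ⟨fun S' => if S'.1 ∈ 𝒞 then 1 else 0, ?_⟩
  intro F
  have key := cman_key d A F
  rw [← h𝒞] at key
  have hterm : ∀ S' : {S' : Finset (Fin K) // S'.card = t + 1 ∧ (S' ∩ L).Nonempty},
      (if S'.1 ∈ 𝒞 then (1 : ZMod 2) else 0) * cmanPacket d F ⟨S'.1, S'.2.1⟩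
        = (fun x => if x ∈ 𝒞 then cmanXf d F x else 0) S'.1 := by
    intro S'
    simp only [ite_mul, one_mul, zero_mul, cmanXf, dif_pos S'.2.1]
  rw [Finset.sum_congr rfl (fun S' _ => hterm S'),
    ← Finset.sum_subtype (Finset.univ.filter
      (fun x : Finset (Fin K) => x.card = t + 1 ∧ (x ∩ L).Nonempty))
      (by intro x; simp) (fun x => if x ∈ 𝒞 then cmanXf d F x else 0),
    Finset.sum_ite_mem]
  have hinter : (Finset.univ.filter
      (fun x : Finset (Fin K) => x.card = t + 1 ∧ (x ∩ L).Nonempty)) ∩ 𝒞 = 𝒞.erase S := by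
    ext x
    rw [Finset.mem_inter, Finset.mem_filter, Finset.mem_erase]
    constructor
    · rintro ⟨⟨-, -, hxL⟩, hx𝒞⟩
      refine ⟨?_, hx𝒞⟩
      rintro rfl
      rw [hSL] at hxL
      exact Finset.not_nonempty_empty hxL
    · rintro ⟨hxne, hx𝒞⟩
      exact ⟨⟨Finset.mem_univ _,
        (Finset.mem_powersetCard.mp (Finset.mem_filter.mp hx𝒞).1).2,
        hne x hx𝒞 hxne⟩, hx𝒞⟩
  rw [hinter]
  have hsum : cmanXf d F S + ∑ x ∈ 𝒞.erase S, cmanXf d F x = 0 := by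
    rw [Finset.add_sum_erase _ _ hS𝒞]; exact key
  have : ∑ x ∈ 𝒞.erase S, cmanXf d F x = cmanXf d F S := by
    have h1 := eq_neg_of_add_eq_zero_right hsum
    rwa [CharTwo.neg_eq] at h1
  rw [this, cmanXf, dif_pos hS]
end

section
/- Achievability of the optimal load under uncoded placement: let K ≥ 1, N ≥ 1 and t be naturals with t+1 ≤ K, let d : Fin K → Fin N be a demand, and let L ⊆ Fin K be a leader set such that d restricted to L is injective and d(L) = d(Fin K). For subfile assignments F : Fin N → {W : Finset (Fin K) // W.card = t} → 𝔽₂, define the packets X_S(F) = ∑_{s∈S} F(d s)(S∖{s}). Then for every user k ∈ Fin K there exists a function dec_k, depending only on the reduced packet collection (X_S(F) : |S| = t+1, S ∩ L ≠ ∅) and on user k's cache contents (F(i)(W) : i ∈ Fin N, W with k ∈ W), such that dec_k outputs the full demanded file (F(d k)(W) : k ∉ W, |W| = t) for every subfile assignment F. Consequently only C(K,t+1) − C(K−|L|,t+1) packets of subfile size suffice to satisfy all demands. -/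
namespace CMANaux

variable {K N t : ℕ}

/-- Extension of a subfile assignment to all finsets (zero off cardinality `t`). -/
noncomputable def Fe (F : Fin N → {W : Finset (Fin K) // W.card = t} → ZMod 2)
    (i : Fin N) (W : Finset (Fin K)) : ZMod 2 :=
  if h : W.card = t then F i ⟨W, h⟩ else 0

lemma Fe_eq (F : Fin N → {W : Finset (Fin K) // W.card = t} → ZMod 2)
    (i : Fin N) (W : Finset (Fin K)) (h : W.card = t) : Fe F i W = F i ⟨W, h⟩ :=
  dif_pos h

lemma packet_eq (d : Fin K → Fin N) (F : Fin N → {W : Finset (Fin K) // W.card = t} → ZMod 2)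
    (S : Finset (Fin K)) (hS : S.card = t + 1) :
    cmanPacket d F ⟨S, hS⟩ = ∑ s ∈ S, Fe F (d s) (S.erase s) := by
  rw [cmanPacket, ← Finset.sum_attach S (fun s => Fe F (d s) (S.erase s))]
  refine Finset.sum_congr rfl fun s _ => ?_
  rw [Fe_eq]

lemma zmod2_add_self (x : ZMod 2) : x + x = 0 := by
  rw [← two_mul]; exact mul_eq_zero_of_left (by decide) x

lemma sdiff_insert_eq {α : Type*} [DecidableEq α] (B A : Finset α) (s : α) :
    B \ insert s A = (B \ A).erase s := by
  ext x
  simp only [Finset.mem_sdiff, Finset.mem_insert, Finset.mem_erase]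
  tauto

open Classical in
/-- Swap `s` with its "partner" in the transversal `A` (the unique element of `A`
demanding the same file). -/
noncomputable def swapP (d : Fin K → Fin N) (p : Finset (Fin K) × Fin K) :
    Finset (Fin K) × Fin K :=
  if h : ∃! x, x ∈ p.1 ∧ d x = d p.2 then
    ⟨insert p.2 (p.1.erase (Finset.choose (fun x => d x = d p.2) p.1 h)),
      Finset.choose (fun x => d x = d p.2) p.1 h⟩
  else p

lemma exu (d : Fin K → Fin N) {D : Finset (Fin N)} {A : Finset (Fin K)} {s : Fin K}
    (himg : A.image d = D) (hcard : A.card = D.card) (hds : d s ∈ D) :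
    ∃! x, x ∈ A ∧ d x = d s := by
  have hinj : Set.InjOn d (A : Set (Fin K)) := by
    rw [← Finset.card_image_iff, himg, hcard]
  rw [← himg] at hds
  obtain ⟨x, hx, hdx⟩ := Finset.mem_image.1 hds
  exact ⟨x, ⟨hx, hdx⟩, fun y ⟨hy, hdy⟩ => hinj hy hx (by rw [hdy, hdx])⟩

lemma swapP_eq (d : Fin K → Fin N) (p : Finset (Fin K) × Fin K)
    (h : ∃! x, x ∈ p.1 ∧ d x = d p.2) :
    ∃ x, x ∈ p.1 ∧ d x = d p.2 ∧ swapP d p = ⟨insert p.2 (p.1.erase x), x⟩ := by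
  refine ⟨Finset.choose (fun x => d x = d p.2) p.1 h,
    Finset.choose_mem (fun x => d x = d p.2) p.1 h,
    Finset.choose_property (fun x => d x = d p.2) p.1 h, ?_⟩
  rw [swapP, dif_pos h]

lemma swapP_id (d : Fin K → Fin N) (p : Finset (Fin K) × Fin K)
    (h : ∃! x, x ∈ p.1 ∧ d x = d p.2) (hs : p.2 ∈ p.1) : swapP d p = p := by
  obtain ⟨x, hx, hdx, heq⟩ := swapP_eq d p h
  have hxs : x = p.2 := h.unique ⟨hx, hdx⟩ ⟨hs, rfl⟩
  rw [heq, hxs, Finset.insert_erase hs]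

/-- The core pairing identity: the sum over all transversals `A` of `D` inside `B`
of the packet of `B \ A` vanishes. -/
lemma identity (d : Fin K → Fin N)
    (F : Fin N → {W : Finset (Fin K) // W.card = t} → ZMod 2)
    (B : Finset (Fin K)) (D : Finset (Fin N)) (hBD : ∀ s ∈ B, d s ∈ D) :
    ∑ A ∈ B.powerset.filter (fun A => A.image d = D ∧ A.card = D.card),
      ∑ s ∈ B \ A, Fe F (d s) (B \ insert s A) = 0 := by
  classical
  set T := B.powerset.filter (fun A => A.image d = D ∧ A.card = D.card) with hT
  have hTmem : ∀ A ∈ T, A ⊆ B ∧ A.image d = D ∧ A.card = D.card := by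
    intro A hA
    simp only [hT, Finset.mem_filter, Finset.mem_powerset] at hA
    exact ⟨hA.1, hA.2.1, hA.2.2⟩
  have hTswap : ∀ p ∈ T ×ˢ B, swapP d p ∈ T ×ˢ B ∧
      (if (swapP d p).2 ∉ (swapP d p).1 then
          Fe F (d (swapP d p).2) (B \ insert (swapP d p).2 (swapP d p).1) else 0)
        = (if p.2 ∉ p.1 then Fe F (d p.2) (B \ insert p.2 p.1) else 0) ∧
      swapP d (swapP d p) = p ∧ (p.2 ∉ p.1 → (swapP d p).2 ≠ p.2) := by
    intro p hp
    rw [Finset.mem_product] at hp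
    obtain ⟨hAB, himg, hcard⟩ := hTmem p.1 hp.1
    have hsB : p.2 ∈ B := hp.2
    have h : ∃! x, x ∈ p.1 ∧ d x = d p.2 := exu d himg hcard (hBD _ hsB)
    by_cases hin : p.2 ∈ p.1
    · have hid := swapP_id d p h hin
      rw [hid]
      exact ⟨Finset.mem_product.2 hp, rfl, hid, fun hc => absurd hin hc⟩
    · obtain ⟨x, hx, hdx, heq⟩ := swapP_eq d p h
      have hxne : x ≠ p.2 := fun hc => hin (hc ▸ hx)
      set A' := insert p.2 (p.1.erase x) with hA'
      have hxA' : x ∉ A' := by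
        simp [hA', Finset.mem_insert, Finset.mem_erase, hxne]
      have hA'B : A' ⊆ B := by
        rw [hA']
        exact Finset.insert_subset hsB ((Finset.erase_subset _ _).trans hAB)
      have hA'img : A'.image d = D := by
        rw [hA', Finset.image_insert, ← hdx, ← Finset.image_insert,
          Finset.insert_erase hx, himg]
      have hA'card : A'.card = D.card := by
        rw [hA', Finset.card_insert_of_notMem
          (fun hc => hin (Finset.mem_of_mem_erase hc)),
          Finset.card_erase_of_mem hx, ← hcard]
        exact Nat.succ_pred_eq_of_pos (Finset.card_pos.2 ⟨x, hx⟩)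
      have hA'T : A' ∈ T := by
        simp only [hT, Finset.mem_filter, Finset.mem_powerset]
        exact ⟨hA'B, hA'img, hA'card⟩
      have hxB : x ∈ B := hAB hx
      have hswapmem : swapP d p ∈ T ×ˢ B := by
        rw [heq]; exact Finset.mem_product.2 ⟨hA'T, hxB⟩
      have hins : insert x A' = insert p.2 p.1 := by
        rw [hA', Finset.insert_comm, Finset.insert_erase hx]
      have hterm : (if (swapP d p).2 ∉ (swapP d p).1 then
          Fe F (d (swapP d p).2) (B \ insert (swapP d p).2 (swapP d p).1) else 0)
          = (if p.2 ∉ p.1 then Fe F (d p.2) (B \ insert p.2 p.1) else 0) := by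
        rw [heq]
        simp only [hxA', hin, if_pos, not_false_iff]
        rw [hdx, hins]
      have hswapswap : swapP d (swapP d p) = p := by
        rw [heq]
        have h2 : ∃! y, y ∈ A' ∧ d y = d x :=
          exu d hA'img hA'card (hBD _ hxB)
        obtain ⟨y, hy, hdy, heq2⟩ := swapP_eq d (A', x) h2
        have hpA' : p.2 ∈ A' := Finset.mem_insert_self _ _
        have hys : y = p.2 := h2.unique ⟨hy, hdy⟩ ⟨hpA', hdx.symm⟩
        rw [heq2, hys]
        have herase : A'.erase p.2 = p.1.erase x := by
          rw [hA', Finset.erase_insert (fun hc => hin (Finset.mem_of_mem_erase hc))]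
        rw [herase, Finset.insert_erase hx]
      refine ⟨hswapmem, hterm, hswapswap, fun _ => ?_⟩
      rw [heq]; exact hxne
  have hfold : ∑ A ∈ T, ∑ s ∈ B \ A, Fe F (d s) (B \ insert s A)
      = ∑ p ∈ T ×ˢ B, (if p.2 ∉ p.1 then Fe F (d p.2) (B \ insert p.2 p.1) else 0) := by
    rw [Finset.sum_product' T B
      (fun A s => if s ∉ A then Fe F (d s) (B \ insert s A) else 0)]
    refine Finset.sum_congr rfl fun A _ => ?_
    rw [Finset.sdiff_eq_filter, Finset.sum_filter]
  rw [hfold]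
  refine Finset.sum_involution (fun p _ => swapP d p)
    (fun p hp => ?_) (fun p hp hne => ?_) (fun p hp => (hTswap p hp).1)
    (fun p hp => (hTswap p hp).2.2.1)
  · rw [(hTswap p hp).2.1]
    exact zmod2_add_self _
  · have hin : p.2 ∉ p.1 := by
      intro hc
      exact hne (by simp [hc])
    have hne2 := (hTswap p hp).2.2.2 hin
    intro hc
    exact hne2 (congrArg Prod.snd hc)

/-- If all reduced (leader-touching) packets vanish then all packets vanish. -/
lemma packets_zero (d : Fin K → Fin N) (L : Finset (Fin K))
    (hInj : Set.InjOn d (L : Set (Fin K)))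
    (hCover : L.image d = (Finset.univ : Finset (Fin K)).image d)
    (F : Fin N → {W : Finset (Fin K) // W.card = t} → ZMod 2)
    (hX : ∀ (S : Finset (Fin K)) (hS : S.card = t + 1), (S ∩ L).Nonempty →
      cmanPacket d F ⟨S, hS⟩ = 0) :
    ∀ (S : Finset (Fin K)) (hS : S.card = t + 1), cmanPacket d F ⟨S, hS⟩ = 0 := by
  intro S hS
  by_cases hSL : (S ∩ L).Nonempty
  · exact hX S hS hSL
  classical
  have hdisjSL : ∀ x ∈ S, x ∉ L := fun x hx hxL =>
    hSL ⟨x, Finset.mem_inter.2 ⟨hx, hxL⟩⟩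
  set D := S.image d with hD
  set Lp := L.filter (fun ℓ => d ℓ ∈ D) with hLp
  have hLpL : Lp ⊆ L := Finset.filter_subset _ _
  have hLpimg : Lp.image d = D := by
    apply Finset.Subset.antisymm
    · intro f hf
      obtain ⟨ℓ, hℓ, rfl⟩ := Finset.mem_image.1 hf
      exact (Finset.mem_filter.1 hℓ).2
    · intro f hf
      have hfL : f ∈ L.image d := by
        rw [hCover]
        obtain ⟨s, _, rfl⟩ := Finset.mem_image.1 hf
        exact Finset.mem_image.2 ⟨s, Finset.mem_univ s, rfl⟩
      obtain ⟨ℓ, hℓ, rfl⟩ := Finset.mem_image.1 hfL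
      exact Finset.mem_image.2 ⟨ℓ, Finset.mem_filter.2 ⟨hℓ, hf⟩, rfl⟩
  have hLpcard : Lp.card = D.card := by
    rw [← hLpimg]
    exact (Finset.card_image_of_injOn (hInj.mono (Finset.coe_subset.2 hLpL))).symm
  have hdisj : Disjoint S Lp :=
    Finset.disjoint_left.2 fun x hx hx' => hdisjSL x hx (hLpL hx')
  set B := S ∪ Lp with hB
  have hBcard : B.card = t + 1 + D.card := by
    rw [hB, Finset.card_union_of_disjoint hdisj, hS, hLpcard]
  have hBD : ∀ s ∈ B, d s ∈ D := by
    intro s hs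
    rcases Finset.mem_union.1 hs with h | h
    · exact Finset.mem_image_of_mem d h
    · exact (Finset.mem_filter.1 h).2
  set T := B.powerset.filter (fun A => A.image d = D ∧ A.card = D.card) with hT
  have hLpT : Lp ∈ T := by
    simp only [hT, Finset.mem_filter, Finset.mem_powerset]
    exact ⟨Finset.subset_union_right, hLpimg, hLpcard⟩
  have hBLp : B \ Lp = S := by
    rw [hB, Finset.union_sdiff_cancel_right hdisj]
  have hsum := identity d F B D hBD
  rw [← hT] at hsum
  have hsingle : ∑ A ∈ T, ∑ s ∈ B \ A, Fe F (d s) (B \ insert s A)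
      = cmanPacket d F ⟨S, hS⟩ := by
    rw [Finset.sum_eq_single_of_mem Lp hLpT]
    · rw [packet_eq d F S hS]
      rw [show (B \ Lp) = S from hBLp]  -- ensure inner sum over S
      refine Finset.sum_congr rfl fun s _ => ?_
      rw [sdiff_insert_eq, hBLp]
    · intro A hA hAne
      obtain ⟨hAB, himg, hcard⟩ := by
        simpa only [hT, Finset.mem_filter, Finset.mem_powerset, and_assoc] using hA
      have hBA : (B \ A).card = t + 1 := by
        rw [Finset.card_sdiff_of_subset hAB, hBcard, hcard, Nat.add_sub_cancel]
      have hsum2 : ∑ s ∈ B \ A, Fe F (d s) (B \ insert s A)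
          = cmanPacket d F ⟨B \ A, hBA⟩ := by
        rw [packet_eq d F (B \ A) hBA]
        refine Finset.sum_congr rfl fun s _ => ?_
        rw [sdiff_insert_eq]
      rw [hsum2]
      apply hX
      -- ((B \ A) ∩ L).Nonempty
      have hnsub : ¬ Lp ⊆ A := by
        intro hsub
        exact hAne (Finset.eq_of_subset_of_card_le hsub (le_of_eq (by rw [hcard, hLpcard]))).symm
      obtain ⟨ℓ, hℓLp, hℓA⟩ := Finset.not_subset.1 hnsub
      exact ⟨ℓ, Finset.mem_inter.2
        ⟨Finset.mem_sdiff.2 ⟨Finset.mem_union_right _ hℓLp, hℓA⟩, hLpL hℓLp⟩⟩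
  rw [← hsingle]
  exact hsum

/-- Kernel lemma: zero reduced packets and zero cache imply zero demanded subfiles. -/
lemma kernel (d : Fin K → Fin N) (L : Finset (Fin K))
    (hInj : Set.InjOn d (L : Set (Fin K)))
    (hCover : L.image d = (Finset.univ : Finset (Fin K)).image d)
    (k : Fin K) (F : Fin N → {W : Finset (Fin K) // W.card = t} → ZMod 2)
    (hX : ∀ (S : Finset (Fin K)) (hS : S.card = t + 1), (S ∩ L).Nonempty →
      cmanPacket d F ⟨S, hS⟩ = 0)
    (hC : ∀ (i : Fin N) (V : Finset (Fin K)), k ∈ V → Fe F i V = 0) :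
    ∀ (W : Finset (Fin K)) (hW : W.card = t), k ∉ W → F (d k) ⟨W, hW⟩ = 0 := by
  intro W hW hk
  classical
  have hcard : (insert k W).card = t + 1 := by
    rw [Finset.card_insert_of_notMem hk, hW]
  have h1 : cmanPacket d F ⟨insert k W, hcard⟩ = 0 :=
    packets_zero d L hInj hCover F hX _ _
  rw [packet_eq, Finset.sum_insert hk, Finset.erase_insert hk] at h1
  have h2 : ∑ s ∈ W, Fe F (d s) ((insert k W).erase s) = 0 := by
    refine Finset.sum_eq_zero fun s hs => ?_
    apply hC
    refine Finset.mem_erase.2 ⟨?_, Finset.mem_insert_self _ _⟩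
    intro hks
    exact hk (hks ▸ hs)
  rw [h2, add_zero] at h1
  rw [← Fe_eq F (d k) W hW]
  exact h1

end CMANaux

/-- Achievability of the optimal load under uncoded placement: if `L` is a leader
set (`d` injective on `L` and `d(L) = d(Fin K)`), then every user `k` can recover
its whole demanded file from the reduced packet collection
`(X_S(F) : |S| = t+1, S ∩ L ≠ ∅)` together with its cache contents
`(F_{i,W} : k ∈ W)`, uniformly in the subfile assignment `F`. -/
theorem cMAN_reduced_delivery_correct (K N t : ℕ) (hK : 1 ≤ K) (hN : 1 ≤ N)
    (ht : t + 1 ≤ K) (d : Fin K → Fin N) (L : Finset (Fin K))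
    (hInj : Set.InjOn d (L : Set (Fin K)))
    (hCover : L.image d = (Finset.univ : Finset (Fin K)).image d) :
    ∀ k : Fin K,
      ∃ dec : ({S : Finset (Fin K) // S.card = t + 1 ∧ (S ∩ L).Nonempty} → ZMod 2) →
          ((i : Fin N) → {W : Finset (Fin K) // W.card = t ∧ k ∈ W} → ZMod 2) →
          ({W : Finset (Fin K) // W.card = t ∧ k ∉ W} → ZMod 2),
        ∀ F : Fin N → {W : Finset (Fin K) // W.card = t} → ZMod 2,
          dec (fun S => cmanPacket d F ⟨S.1, S.2.1⟩) (fun i W => F i ⟨W.1, W.2.1⟩)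
            = fun W => F (d k) ⟨W.1, W.2.1⟩ := by
  intro k
  classical
  have claim : ∀ (F G : Fin N → {W : Finset (Fin K) // W.card = t} → ZMod 2),
      ((fun S : {S : Finset (Fin K) // S.card = t + 1 ∧ (S ∩ L).Nonempty} =>
          cmanPacket d F ⟨S.1, S.2.1⟩) = fun S => cmanPacket d G ⟨S.1, S.2.1⟩) →
      ((fun (i : Fin N) (W : {W : Finset (Fin K) // W.card = t ∧ k ∈ W}) =>
          F i ⟨W.1, W.2.1⟩) = fun i W => G i ⟨W.1, W.2.1⟩) →
      ∀ W : {W : Finset (Fin K) // W.card = t ∧ k ∉ W},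
        F (d k) ⟨W.1, W.2.1⟩ = G (d k) ⟨W.1, W.2.1⟩ := by
    intro F G hP hC W
    set H : Fin N → {W : Finset (Fin K) // W.card = t} → ZMod 2 :=
      fun i V => F i V - G i V with hH
    have hXH : ∀ (S : Finset (Fin K)) (hS : S.card = t + 1), (S ∩ L).Nonempty →
        cmanPacket d H ⟨S, hS⟩ = 0 := by
      intro S hS hne
      have hsub : cmanPacket d H ⟨S, hS⟩
          = cmanPacket d F ⟨S, hS⟩ - cmanPacket d G ⟨S, hS⟩ := by
        simp only [cmanPacket, hH]
        rw [← Finset.sum_sub_distrib]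
      rw [hsub]
      exact sub_eq_zero_of_eq (congrFun hP ⟨S, hS, hne⟩)
    have hCH : ∀ (i : Fin N) (V : Finset (Fin K)), k ∈ V → CMANaux.Fe H i V = 0 := by
      intro i V hkV
      by_cases h : V.card = t
      · rw [CMANaux.Fe_eq H i V h]
        exact sub_eq_zero_of_eq (congrFun (congrFun hC i) ⟨V, h, hkV⟩)
      · exact dif_neg h
    have hker := CMANaux.kernel d L hInj hCover k H hXH hCH W.1 W.2.1 W.2.2
    exact sub_eq_zero.1 hker
  refine ⟨fun p c =>
    if h : ∃ F : Fin N → {W : Finset (Fin K) // W.card = t} → ZMod 2,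
        (fun S : {S : Finset (Fin K) // S.card = t + 1 ∧ (S ∩ L).Nonempty} =>
          cmanPacket d F ⟨S.1, S.2.1⟩) = p ∧
        (fun (i : Fin N) (W : {W : Finset (Fin K) // W.card = t ∧ k ∈ W}) =>
          F i ⟨W.1, W.2.1⟩) = c
    then fun W => h.choose (d k) ⟨W.1, W.2.1⟩ else fun _ => 0, ?_⟩
  intro F
  have hex : ∃ G : Fin N → {W : Finset (Fin K) // W.card = t} → ZMod 2,
      (fun S : {S : Finset (Fin K) // S.card = t + 1 ∧ (S ∩ L).Nonempty} =>
        cmanPacket d G ⟨S.1, S.2.1⟩)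
        = (fun S => cmanPacket d F ⟨S.1, S.2.1⟩) ∧
      (fun (i : Fin N) (W : {W : Finset (Fin K) // W.card = t ∧ k ∈ W}) =>
        G i ⟨W.1, W.2.1⟩) = (fun i W => F i ⟨W.1, W.2.1⟩) := ⟨F, rfl, rfl⟩
  beta_reduce
  rw [dif_pos hex]
  funext W
  exact claim hex.choose F hex.choose_spec.1 hex.choose_spec.2 W
end
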